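/- arXiv:1802.05266 — 3 statements merged into one kernel-verified Lean document; each statement's English description precedes it below -/
import Mathlib

section
/- Soundness of circular proofs (combinatorial form): Let G be a finite proof-graph whose inference rules are axiom, symmetric cut, and split over Boolean formulas, and let F be a flow assignment with balances B(u). If α is a Boolean assignment satisfying every formula labelling a vertex of negative balance (source), then α satisfies every formula labelling a vertex of positive balance (sink). -/
/-- Propositional formulas over a set `V` of variables. -/
inductive PropForm (V : Type) where
  | var : V → PropForm V
  | neg : PropForm V → PropForm V
  | disj : PropForm V → PropForm V → PropForm V
  | conj : PropForm V → PropForm V → PropForm V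

/-- Boolean evaluation of a formula under an assignment. -/
def PropForm.eval {V : Type} (α : V → Bool) : PropForm V → Bool
  | .var v => α v
  | .neg A => !(A.eval α)
  | .disj A B => A.eval α || B.eval α
  | .conj A B => A.eval α && B.eval α

/-- Soundness of circular proofs (combinatorial form).  A proof-graph is a
bipartite directed graph with inference vertices `I` (each with premise set
`Nm w ⊆ J` and conclusion set `Np w ⊆ J`) and formula vertices `J` labelled by
formulas; every inference vertex is an instance of axiom, symmetric cut, or
split.  `F` is a positive flow assignment, and the balance of `u ∈ J` is the
inflow minus the outflow.  If an assignment `α` satisfies the formula of every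
vertex of negative balance, then it satisfies the formula of every vertex of
positive balance. -/
theorem circular_proof_sound {V I J : Type} [Fintype I] [Fintype J] [DecidableEq J]
    (Nm Np : I → Finset J) (label : J → PropForm V) (F : I → ℝ)
    (hFpos : ∀ w, 0 < F w)
    (hrule : ∀ w : I,
      -- axiom: no premise, one conclusion of the form A ∨ ¬A
      (∃ a : J, ∃ A : PropForm V, Nm w = ∅ ∧ Np w = {a} ∧
          label a = PropForm.disj A (PropForm.neg A)) ∨
      -- symmetric cut: premises C ∨ A and C ∨ ¬A, conclusion C
      (∃ a b c : J, ∃ C A : PropForm V, Nm w = {a, b} ∧ Np w = {c} ∧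
          label a = PropForm.disj C A ∧
          label b = PropForm.disj C (PropForm.neg A) ∧ label c = C) ∨
      -- split: premise C, conclusions C ∨ A and C ∨ ¬A
      (∃ a b c : J, ∃ C A : PropForm V, Nm w = {a} ∧ Np w = {b, c} ∧
          label a = C ∧ label b = PropForm.disj C A ∧
          label c = PropForm.disj C (PropForm.neg A)))
    (B : J → ℝ)
    (hB : ∀ u : J, B u =
      (∑ w ∈ Finset.univ.filter (fun w : I => u ∈ Np w), F w)
        - ∑ w ∈ Finset.univ.filter (fun w : I => u ∈ Nm w), F w)
    (α : V → Bool)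
    (hsources : ∀ u : J, B u < 0 → (label u).eval α = true) :
    ∀ s : J, 0 < B s → (label s).eval α = true := by

  classical
  intro s hs
  by_contra hfalse
  set q : J → Prop := fun u => (label u).eval α = false with hq
  set S : Finset J := Finset.univ.filter q with hS
  have hsS : s ∈ S := by
    simp only [hS, hq, Finset.mem_filter, Finset.mem_univ, true_and]
    exact Bool.eq_false_iff.mpr hfalse
  -- key counting lemma
  have key : ∀ w : I, ((Np w).filter q).card ≤ ((Nm w).filter q).card := by
    intro w
    rcases hrule w with ⟨a, A, hm, hp, hl⟩ |
      ⟨a, b, c, C, A, hm, hp, ha, hb, hc⟩ | ⟨a, b, c, C, A, hm, hp, ha, hb, hc⟩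
    · rw [hm, hp]
      have htrue : (label a).eval α = true := by
        rw [hl]; cases hA : A.eval α <;> simp [PropForm.eval, hA]
      simp [Finset.filter_singleton, hq, htrue]
    · rw [hm, hp]
      by_cases hC : (label c).eval α = false
      · have hCf : C.eval α = false := by rw [hc] at hC; exact hC
        have hmem : ∃ x ∈ ({a, b} : Finset J), q x := by
          cases hA : A.eval α
          · exact ⟨a, by simp, by simp [hq, ha, PropForm.eval, hCf, hA]⟩
          · exact ⟨b, by simp, by simp [hq, hb, PropForm.eval, hCf, hA]⟩
        have h1 : 0 < (({a, b} : Finset J).filter q).card := by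
          obtain ⟨x, hx, hx'⟩ := hmem
          exact Finset.card_pos.mpr ⟨x, Finset.mem_filter.mpr ⟨hx, hx'⟩⟩
        have h2 : (({c} : Finset J).filter q).card ≤ 1 := by
          calc (({c} : Finset J).filter q).card ≤ ({c} : Finset J).card :=
                Finset.card_filter_le _ _
            _ = 1 := Finset.card_singleton c
        omega
      · have : (({c} : Finset J).filter q) = ∅ := by
          rw [Finset.filter_singleton]
          simp [hq, hC]
        simp [this]
    · rw [hm, hp]
      by_cases hCf : C.eval α = false
      · have hRHS : (({a} : Finset J).filter q).card = 1 := by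
          rw [Finset.filter_singleton]
          simp [hq, ha, hCf]
        have hLHS : (({b, c} : Finset J).filter q).card ≤ 1 := by
          cases hA : A.eval α
          · have hcT : (label c).eval α = true := by
              simp [hc, PropForm.eval, hA]
            have hsub : ({b, c} : Finset J).filter q ⊆ {b} := by
              intro x hx
              rcases Finset.mem_filter.mp hx with ⟨hx1, hx2⟩
              rcases Finset.mem_insert.mp hx1 with h | h
              · simp [h]
              · exfalso
                rw [Finset.mem_singleton.mp h] at hx2
                rw [hq] at hx2
                simp [hcT] at hx2
            calc (({b, c} : Finset J).filter q).card ≤ ({b} : Finset J).card :=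
                  Finset.card_le_card hsub
              _ = 1 := Finset.card_singleton b
          · have hbT : (label b).eval α = true := by
              simp [hb, PropForm.eval, hA]
            have hsub : ({b, c} : Finset J).filter q ⊆ {c} := by
              intro x hx
              rcases Finset.mem_filter.mp hx with ⟨hx1, hx2⟩
              rcases Finset.mem_insert.mp hx1 with h | h
              · exfalso
                rw [h] at hx2
                rw [hq] at hx2
                simp [hbT] at hx2
              · exact h
            calc (({b, c} : Finset J).filter q).card ≤ ({c} : Finset J).card :=
                  Finset.card_le_card hsub
              _ = 1 := Finset.card_singleton c
        omega
      · have hCt : C.eval α = true := by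
          cases h : C.eval α
          · exact absurd h hCf
          · rfl
        have : (({b, c} : Finset J).filter q) = ∅ := by
          apply Finset.filter_false_of_mem
          intro x hx
          rcases Finset.mem_insert.mp hx with h | h
          · rw [h, hq]; simp [hb, PropForm.eval, hCt]
          · rw [Finset.mem_singleton.mp h, hq]; simp [hc, PropForm.eval, hCt]
        simp [this]
  -- rewrite the sum of balances over S
  have step1 : ∀ (N : I → Finset J) (w : I),
      ∑ u ∈ S, (if u ∈ N w then F w else 0)
        = (((N w).filter q).card : ℝ) * F w := by
    intro N w
    rw [Finset.sum_ite_mem, Finset.sum_const, nsmul_eq_mul]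
    congr 2
    apply Finset.card_nbij id
    · intro x hx
      rcases Finset.mem_inter.mp hx with ⟨h1, h2⟩
      exact Finset.mem_filter.mpr ⟨h2, (Finset.mem_filter.mp h1).2⟩
    · intro x hx y hy h; exact h
    · intro x hx
      rcases Finset.mem_filter.mp hx with ⟨h1, h2⟩
      exact ⟨x, Finset.mem_inter.mpr ⟨Finset.mem_filter.mpr ⟨Finset.mem_univ x, h2⟩, h1⟩, rfl⟩
  have hsum_eq : ∑ u ∈ S, B u
      = ∑ w : I, ((((Np w).filter q).card : ℝ) - (((Nm w).filter q).card : ℝ)) * F w := by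
    calc ∑ u ∈ S, B u
        = ∑ u ∈ S, ((∑ w : I, if u ∈ Np w then F w else 0)
            - ∑ w : I, if u ∈ Nm w then F w else 0) := by
          refine Finset.sum_congr rfl fun u _ => ?_
          rw [hB u, Finset.sum_filter, Finset.sum_filter]
      _ = (∑ u ∈ S, ∑ w : I, if u ∈ Np w then F w else 0)
            - ∑ u ∈ S, ∑ w : I, if u ∈ Nm w then F w else 0 := by
          rw [Finset.sum_sub_distrib]
      _ = (∑ w : I, ∑ u ∈ S, if u ∈ Np w then F w else 0)
            - ∑ w : I, ∑ u ∈ S, if u ∈ Nm w then F w else 0 := by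
          rw [Finset.sum_comm, Finset.sum_comm (s := S)]
      _ = (∑ w : I, (((Np w).filter q).card : ℝ) * F w)
            - ∑ w : I, (((Nm w).filter q).card : ℝ) * F w := by
          rw [Finset.sum_congr rfl fun w _ => step1 Np w,
            Finset.sum_congr rfl fun w _ => step1 Nm w]
      _ = _ := by
          rw [← Finset.sum_sub_distrib]
          exact Finset.sum_congr rfl fun w _ => by ring
  have hsum_le : ∑ u ∈ S, B u ≤ 0 := by
    rw [hsum_eq]
    apply Finset.sum_nonpos
    intro w _
    apply mul_nonpos_of_nonpos_of_nonneg
    · have := key w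
      have : (((Np w).filter q).card : ℝ) ≤ (((Nm w).filter q).card : ℝ) := by
        exact_mod_cast this
      linarith
    · exact (hFpos w).le
  have hsum_pos : 0 < ∑ u ∈ S, B u := by
    apply Finset.sum_pos'
    · intro u hu
      by_contra hneg
      push_neg at hneg
      have := hsources u hneg
      have hu' := (Finset.mem_filter.mp hu).2
      rw [hq] at hu'
      simp [this] at hu'
    · exact ⟨s, hsS, hs⟩
  linarith
end

section
/- Soundness of circular proofs via the algebraic argument: with notation as in the proof-graph setting, let Z_u ∈ {0,1} be the truth value under α of the formula at vertex u. If each inference vertex w satisfies Σ_{u∈N⁻(w)}(1-Z_u) - Σ_{u∈N⁺(w)}(1-Z_u) ≥ 0, each flow F(w) > 0, Z_u = 1 for every source u (vertex with B(u) < 0), and Z_s = 0 for some vertex s, then B(s) ≤ 0. -/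
/-- Soundness of circular proofs, algebraic argument.  In a finite bipartite
proof-graph with inference vertices `I` (with in-neighbour set `Nm w ⊆ J` and
out-neighbour set `Np w ⊆ J`), let `Z u ∈ {0,1}` be the truth value of the
formula at vertex `u`, and `B u = Σ_{w∈N⁻(u)} F w - Σ_{w∈N⁺(u)} F w` the balance
of `u` under the flow `F`.  If every inference vertex satisfies
`Σ_{u∈N⁻(w)}(1-Z_u) - Σ_{u∈N⁺(w)}(1-Z_u) ≥ 0`, all flows are positive, `Z u = 1`
at every source (vertex of negative balance), and `Z s = 0`, then `B s ≤ 0`. -/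
theorem circular_proof_sound_algebraic {I J : Type} [Fintype I] [Fintype J]
    [DecidableEq J]
    (Nm Np : I → Finset J) (F : I → ℝ) (Z : J → ℝ)
    (hZ01 : ∀ u : J, Z u = 0 ∨ Z u = 1)
    (hrule : ∀ w : I,
      0 ≤ (∑ u ∈ Nm w, (1 - Z u)) - ∑ u ∈ Np w, (1 - Z u))
    (hFpos : ∀ w : I, 0 < F w)
    (B : J → ℝ)
    (hB : ∀ u : J, B u =
      (∑ w ∈ Finset.univ.filter (fun w : I => u ∈ Np w), F w)
        - ∑ w ∈ Finset.univ.filter (fun w : I => u ∈ Nm w), F w)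
    (hsources : ∀ u : J, B u < 0 → Z u = 1)
    (s : J) (hs : Z s = 0) :
    B s ≤ 0 := by
  have swap : ∀ N : I → Finset J,
      ∑ u, (1 - Z u) * ∑ w ∈ Finset.univ.filter (fun w : I => u ∈ N w), F w
        = ∑ w, F w * ∑ u ∈ N w, (1 - Z u) := by
    intro N
    simp_rw [Finset.mul_sum, Finset.sum_filter]
    rw [Finset.sum_comm]
    refine Finset.sum_congr rfl fun w _ => ?_
    rw [Finset.sum_ite_mem, Finset.univ_inter]
    exact Finset.sum_congr rfl fun u _ => mul_comm _ _

  have key : ∑ u, (1 - Z u) * B u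
      = ∑ w, F w * ((∑ u ∈ Np w, (1 - Z u)) - ∑ u ∈ Nm w, (1 - Z u)) := by
    calc ∑ u, (1 - Z u) * B u
        = (∑ u, (1 - Z u) * ∑ w ∈ Finset.univ.filter (fun w : I => u ∈ Np w), F w)
          - ∑ u, (1 - Z u) * ∑ w ∈ Finset.univ.filter (fun w : I => u ∈ Nm w), F w := by
          rw [← Finset.sum_sub_distrib]
          exact Finset.sum_congr rfl fun u _ => by rw [hB u, mul_sub]
      _ = ∑ w, F w * ((∑ u ∈ Np w, (1 - Z u)) - ∑ u ∈ Nm w, (1 - Z u)) := by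
          rw [swap Np, swap Nm, ← Finset.sum_sub_distrib]
          exact Finset.sum_congr rfl fun w _ => (mul_sub _ _ _).symm
  have hS : ∑ u, (1 - Z u) * B u ≤ 0 := by
    rw [key]
    refine Finset.sum_nonpos fun w _ => ?_
    have := hrule w
    nlinarith [hFpos w]
  have hterm : ∀ u : J, 0 ≤ (1 - Z u) * B u := by
    intro u
    rcases lt_or_ge (B u) 0 with h | h
    · rw [hsources u h]; simp
    · rcases hZ01 u with h0 | h0 <;> rw [h0] <;> nlinarith
  have hsingle := Finset.single_le_sum (f := fun u => (1 - Z u) * B u)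
    (fun u _ => hterm u) (Finset.mem_univ s)
  simp only [hs] at hsingle
  linarith
end

section
/- Given a Circular Resolution proof graph with inference vertices I (labelled axiom, symmetric cut, or split), formula vertices J labelled by clauses A_u, flow F, and balances B, the polynomial identity Σ_{u∈J} B(u)·T(A_u) = Σ_{w∈I} F(w)·P_w holds, where P_w = T(A_a) for an axiom with conclusion a, P_w = -T(A_a) - T(A_b) + T(A_c) for a cut with premises a,b and conclusion c, and P_w = -T(A_a) + T(A_b) + T(A_c) for a split with premise a and conclusions b,c. -/
open MvPolynomial

/-- The encoding `T` of a clause with positive-literal set `pos` and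
negative-literal set `neg`: `T(C) = -∏_{j : X_j ∈ C} X̄_j ∏_{j : ¬X_j ∈ C} X_j`
in `ℝ[X_1,…,X_n,X̄_1,…,X̄_n]`, where `X_j` is `X (Sum.inl j)` and `X̄_j` is
`X (Sum.inr j)`. -/
noncomputable def Tcl (n : ℕ) (pos neg : Finset (Fin n)) :
    MvPolynomial (Fin n ⊕ Fin n) ℝ :=
  -((∏ j ∈ pos, X (Sum.inr j)) * ∏ j ∈ neg, X (Sum.inl j))

/-- For a Circular Resolution proof graph (inference vertices `I` labelled
axiom, symmetric cut or split; formula vertices `J` labelled by clauses with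
positive literals `pos u` and negative literals `neg u`; flow `F`; balances
`B u = Σ_{w∈N⁻(u)} F w - Σ_{w∈N⁺(u)} F w`), the polynomial identity
`Σ_{u∈J} B(u)·T(A_u) = Σ_{w∈I} F(w)·P_w` holds, where `P_w = T(A_a)` for an
axiom with conclusion `a`, `P_w = -T(A_a) - T(A_b) + T(A_c)` for a cut with
premises `a, b` and conclusion `c`, and `P_w = -T(A_a) + T(A_b) + T(A_c)` for a
split with premise `a` and conclusions `b, c`. -/
theorem circular_resolution_polynomial_identity
    {I J : Type} [Fintype I] [Fintype J] [DecidableEq J] (n : ℕ)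
    (Nm Np : I → Finset J) (pos neg : J → Finset (Fin n))
    (F : I → ℝ) (P : I → MvPolynomial (Fin n ⊕ Fin n) ℝ)
    (hrule : ∀ w : I,
      -- axiom: conclusion a labelled by the clause X_i ∨ ¬X_i
      (∃ a : J, ∃ i : Fin n, Nm w = ∅ ∧ Np w = {a} ∧
          pos a = {i} ∧ neg a = {i} ∧
          P w = Tcl n (pos a) (neg a)) ∨
      -- symmetric cut: premises C ∨ X_i and C ∨ ¬X_i, conclusion C
      (∃ a b c : J, ∃ i : Fin n, a ≠ b ∧ Nm w = {a, b} ∧ Np w = {c} ∧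
          i ∉ pos c ∧ i ∉ neg c ∧
          pos a = insert i (pos c) ∧ neg a = neg c ∧
          pos b = pos c ∧ neg b = insert i (neg c) ∧
          P w = -Tcl n (pos a) (neg a) - Tcl n (pos b) (neg b)
                  + Tcl n (pos c) (neg c)) ∨
      -- split: premise C, conclusions C ∨ X_i and C ∨ ¬X_i
      (∃ a b c : J, ∃ i : Fin n, b ≠ c ∧ Nm w = {a} ∧ Np w = {b, c} ∧
          i ∉ pos a ∧ i ∉ neg a ∧
          pos b = insert i (pos a) ∧ neg b = neg a ∧
          pos c = pos a ∧ neg c = insert i (neg a) ∧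
          P w = -Tcl n (pos a) (neg a) + Tcl n (pos b) (neg b)
                  + Tcl n (pos c) (neg c)))
    (B : J → ℝ)
    (hB : ∀ u : J, B u =
      (∑ w ∈ Finset.univ.filter (fun w : I => u ∈ Np w), F w)
        - ∑ w ∈ Finset.univ.filter (fun w : I => u ∈ Nm w), F w) :
    ∑ u : J, B u • Tcl n (pos u) (neg u) = ∑ w : I, F w • P w := by
  classical
  have key : ∀ w : I,
      (∑ u ∈ Np w, Tcl n (pos u) (neg u)) - (∑ u ∈ Nm w, Tcl n (pos u) (neg u))
        = P w := by
    intro w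
    rcases hrule w with
        ⟨a, i, h1, h2, _, _, h5⟩ |
        ⟨a, b, c, i, hab, h1, h2, _, _, _, _, _, _, h5⟩ |
        ⟨a, b, c, i, hbc, h1, h2, _, _, _, _, _, _, h5⟩
    · simp [h1, h2, h5]
    · rw [h1, h2, h5, Finset.sum_singleton,
        Finset.sum_insert (by simpa using hab), Finset.sum_singleton]
      ring
    · rw [h1, h2, h5, Finset.sum_singleton,
        Finset.sum_insert (by simpa using hbc), Finset.sum_singleton]
      ring
  calc ∑ u : J, B u • Tcl n (pos u) (neg u)
      = ∑ u : J, ∑ w : I,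
          ((if u ∈ Np w then F w • Tcl n (pos u) (neg u) else 0)
            - (if u ∈ Nm w then F w • Tcl n (pos u) (neg u) else 0)) := by
        refine Finset.sum_congr rfl fun u _ => ?_
        rw [hB u, sub_smul, Finset.sum_smul, Finset.sum_smul,
          Finset.sum_sub_distrib]
        congr 1 <;> rw [Finset.sum_filter]
    _ = ∑ w : I, ∑ u : J,
          ((if u ∈ Np w then F w • Tcl n (pos u) (neg u) else 0)
            - (if u ∈ Nm w then F w • Tcl n (pos u) (neg u) else 0)) :=
        Finset.sum_comm
    _ = ∑ w : I, F w • P w := by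
        refine Finset.sum_congr rfl fun w _ => ?_
        rw [Finset.sum_sub_distrib, Finset.sum_ite_mem, Finset.sum_ite_mem,
          Finset.univ_inter, Finset.univ_inter, ← Finset.smul_sum,
          ← Finset.smul_sum, ← smul_sub, key w]
end
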